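/- arXiv:2304.02730 — 3 statements merged into one kernel-verified Lean document; each statement's English description precedes it below -/
import Mathlib

section
/- If Ranked Pairs rejects an edge (τ, τ') of weight α, then the final accepted edge set H contains a directed path from τ' to τ in which every edge has weight at least α. -/
/-!
Walk along the edge list, keeping two invariants of the accepted set `H`: it is acyclic, and
every edge in it weighs at least `w (τ, τ')`, because the list is sorted by nonincreasing weight
and `(τ, τ')` is still to come. When `(τ, τ')` is rejected, the cycle it would close must use it,
`H` being acyclic; going round the cycle from its last use of `(τ, τ')` to its first gives a path
from `τ'` to `τ` in `H`, whose edges are heavy enough and, never being removed, lie in the final set.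
-/

open Relation

/-- A set `H` of directed edges has a directed cycle. -/
def hasCycle {V : Type*} (H : Set (V × V)) : Prop :=
  ∃ v : V, Relation.TransGen (fun a b : V => (a, b) ∈ H) v v

/-- The greedy (Ranked Pairs) edge-selection process: iterate over the list of
edges, adding each edge to the accumulated set `H` unless doing so would create a
directed cycle in `H`. -/
noncomputable def greedy {V : Type*} : List (V × V) → Set (V × V) → Set (V × V)
  | [], H => H
  | e :: rest, H =>
      greedy rest
        (@ite _ (hasCycle (insert e H)) (Classical.propDecidable _) H (insert e H))

section

variable {V : Type*}

lemma subset_greedy : ∀ (L : List (V × V)) (H : Set (V × V)), H ⊆ greedy L H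
  | [], _ => subset_rfl
  | e :: rest, H => by
    rw [greedy]
    split_ifs
    · exact subset_greedy rest H
    · exact (Set.subset_insert e H).trans (subset_greedy rest _)

lemma not_hasCycle_empty : ¬ hasCycle (∅ : Set (V × V)) := by
  rintro ⟨v, hv⟩
  obtain ⟨c, -, hc⟩ := TransGen.tail'_iff.mp hv
  exact hc

lemma transGen_insert_cases {H : Set (V × V)} {a b x y : V}
    (h : TransGen (fun p q : V => (p, q) ∈ insert (a, b) H) x y) :
    TransGen (fun p q : V => (p, q) ∈ H) x y ∨
      ReflTransGen (fun p q : V => (p, q) ∈ H) x a ∧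
        ReflTransGen (fun p q : V => (p, q) ∈ H) b y := by
  induction h with
  | single hxy =>
    rcases Set.mem_insert_iff.mp hxy with hxy | hxy
    · obtain ⟨rfl, rfl⟩ := Prod.mk.inj hxy
      exact Or.inr ⟨.refl, .refl⟩
    · exact Or.inl (.single hxy)
  | tail _ hcd ih =>
    rcases Set.mem_insert_iff.mp hcd with hcd | hcd
    · obtain ⟨rfl, rfl⟩ := Prod.mk.inj hcd
      exact Or.inr ⟨ih.elim TransGen.to_reflTransGen And.left, .refl⟩
    · exact ih.imp (·.tail hcd) fun ⟨hxa, hby⟩ => ⟨hxa, hby.tail hcd⟩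

lemma reflTransGen_of_hasCycle_insert {H : Set (V × V)} {a b : V}
    (hH : ¬ hasCycle H) (hcyc : hasCycle (insert (a, b) H)) :
    ReflTransGen (fun p q : V => (p, q) ∈ H) b a := by
  obtain ⟨v, hv⟩ := hcyc
  rcases transGen_insert_cases hv with hvv | ⟨hva, hbv⟩
  · exact absurd ⟨v, hvv⟩ hH
  · exact hbv.trans hva

lemma transGen_heavy_of_not_mem_greedy {β : Type*} [LE β] (w : V × V → β) {τ τ' : V}
    (hne : τ ≠ τ') {L : List (V × V)} (hsort : L.Pairwise (fun e f => w f ≤ w e))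
    (hmem : (τ, τ') ∈ L) {H : Set (V × V)} (hH : ¬ hasCycle H)
    (hwH : ∀ e ∈ H, w (τ, τ') ≤ w e) (hrej : (τ, τ') ∉ greedy L H) :
    TransGen (fun a b : V => (a, b) ∈ greedy L H ∧ w (τ, τ') ≤ w (a, b)) τ' τ := by
  induction L generalizing H with
  | nil => exact absurd hmem List.not_mem_nil
  | cons e rest ih =>
    obtain ⟨hhead, hsort⟩ := List.pairwise_cons.mp hsort
    rw [greedy] at hrej ⊢
    split_ifs at hrej ⊢ with hcyc
    · obtain rfl | hrest := List.mem_cons.mp hmem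
      · have hpath := (reflTransGen_iff_eq_or_transGen.mp
          (reflTransGen_of_hasCycle_insert hH hcyc)).resolve_left hne
        exact TransGen.mono (fun p q hpq => ⟨subset_greedy rest H hpq, hwH _ hpq⟩) _ _ hpath
      · exact ih hsort hrest hH hwH hrej
    · obtain rfl | hrest := List.mem_cons.mp hmem
      · exact absurd (subset_greedy rest _ (Set.mem_insert _ H)) hrej
      · refine ih hsort hrest hcyc ?_ hrej
        rintro f (rfl | hf)
        exacts [hhead _ hrest, hwH f hf]

end

theorem rejected_edge_reverse_path_general {V : Type*}
    (w : V × V → ℚ)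
    (L : List (V × V))
    (hmemL : ∀ a b : V, a ≠ b → (a, b) ∈ L)
    (hsort : L.Pairwise (fun e f => w f ≤ w e))
    (τ τ' : V) (hne : τ ≠ τ')
    (hrej : (τ, τ') ∉ greedy L ∅) :
    Relation.TransGen
      (fun a b : V => (a, b) ∈ greedy L ∅ ∧ w (τ, τ') ≤ w (a, b)) τ' τ :=
  transGen_heavy_of_not_mem_greedy w hne hsort (hmemL τ τ' hne) not_hasCycle_empty
    (fun _ he => absurd he (Set.notMem_empty _)) hrej

/-- If Ranked Pairs rejects an edge `(τ, τ')` of weight `α`, then the final accepted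
edge set contains a directed path from `τ'` to `τ` in which every edge has weight at
least `α`. -/
theorem rejected_edge_reverse_path {V : Type*} [Fintype V]
    (w : V × V → ℚ) (hw01 : ∀ e : V × V, 0 ≤ w e ∧ w e ≤ 1)
    (hcompl : ∀ a b : V, a ≠ b → w (a, b) + w (b, a) = 1)
    (L : List (V × V))
    (hmemL : ∀ a b : V, a ≠ b → (a, b) ∈ L)
    (hnd : L.Nodup)
    (hirr : ∀ e ∈ L, e.1 ≠ e.2)
    (hsort : L.Pairwise (fun e f => w f ≤ w e))
    (τ τ' : V) (hne : τ ≠ τ')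
    (hrej : (τ, τ') ∉ greedy L ∅) :
    Relation.TransGen
      (fun a b : V => (a, b) ∈ greedy L ∅ ∧ w (τ, τ') ≤ w (a, b)) τ' τ :=
  rejected_edge_reverse_path_general w L hmemL hsort τ τ' hne hrej
end

section
/- Under Δ-synchrony, if τ ∈ U_{τ_i, τ_j} (i.e., τ ∉ R_{τ_i} and τ ∉ P_{τ_j}) and w(τ_i, τ_j) > 0, where τ, τ_i, τ_j are sent at times t, t_i, t_j respectively, then t_j − Δ ≤ t ≤ t_j + 2Δ. -/
/-- Under Δ-synchrony (every transaction sent at time `t` is received by each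
replica in `[t, t+Δ)`; replicas rank transactions by receipt time), suppose
`τ ∈ U_{τi,τj}`, i.e. `τ ∉ R_{τi}` (some replica receives `τ` before `τi`, so
`w(τ, τi) ≠ 0`) and `τ ∉ P_{τj}` (some replica receives `τj` before `τ`, so
`w(τ, τj) ≠ 1`), and suppose `w(τi, τj) > 0` (some replica receives `τi` before
`τj`). If `τ, τi, τj` are sent at times `t, ti, tj`, then `tj − Δ ≤ t ≤ tj + 2Δ`. -/
theorem contemporary_time_bound {Tx : Type*} {n : ℕ} (hn : 0 < n)
    (Δ : ℝ) (hΔ : 0 ≤ Δ) (send : Tx → ℝ) (recv : Fin n → Tx → ℝ)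
    (hlb : ∀ (r : Fin n) (τ : Tx), send τ ≤ recv r τ)
    (hub : ∀ (r : Fin n) (τ : Tx), recv r τ < send τ + Δ)
    (τ τi τj : Tx)
    (hnotR : ∃ r : Fin n, recv r τ < recv r τi)
    (hnotP : ∃ r : Fin n, recv r τj ≤ recv r τ)
    (hpos : ∃ r : Fin n, recv r τi < recv r τj) :
    send τj - Δ ≤ send τ ∧ send τ ≤ send τj + 2 * Δ := by
  obtain ⟨r1, h1⟩ := hnotR
  obtain ⟨r2, h2⟩ := hnotP
  obtain ⟨r3, h3⟩ := hpos
  constructor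
  · have := hlb r2 τj
    have := hub r2 τ
    linarith
  · have := hlb r1 τ
    have := hub r1 τi
    have := hlb r3 τi
    have := hub r3 τj
    linarith
end

section
/- A monotonic and asymptotically live streaming ranking algorithm induces a well-defined total order on a countably infinite transaction set: given infinite ordering preferences (σ̂_1, ..., σ̂_n), define τ ≺ τ' iff there exists a finite truncation of the inputs on which the algorithm outputs τ before τ'. Then ≺ is a strict total order on the set of all transactions. -/
/-!
Each truncation of the preference streams yields a duplicate-free output list, and by
monotonicity the outputs grow along a directed family, so two transactions can never appear
in both orders. Liveness puts any two transactions in a common output, where one precedes the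
other, and in a common duplicate-free list "precedes" is transitive.
-/

namespace List

variable {α : Type*} {a b c : α} {l : List α}

theorem pair_sublist_iff : [a, b] <+ l ↔ ∃ l₁ l₂ l₃, l = l₁ ++ a :: (l₂ ++ b :: l₃) := by
  constructor
  · rw [cons_sublist_iff]
    rintro ⟨r₁, r₂, rfl, ha, hb⟩
    obtain ⟨l₁, l₂, rfl⟩ := append_of_mem ha
    obtain ⟨l₃, l₄, rfl⟩ := append_of_mem (singleton_sublist.mp hb)
    exact ⟨l₁, l₂ ++ l₃, l₄, by simp⟩
  · rintro ⟨l₁, l₂, l₃, rfl⟩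
    simp

theorem pair_sublist_or_pair_sublist (ha : a ∈ l) (hb : b ∈ l) (hab : a ≠ b) :
    [a, b] <+ l ∨ [b, a] <+ l := by
  induction l with
  | nil => simp at ha
  | cons x l ih =>
    rcases mem_cons.mp ha with rfl | ha'
    · exact .inl ((singleton_sublist.mpr ((mem_cons.mp hb).resolve_left hab.symm)).cons_cons a)
    rcases mem_cons.mp hb with rfl | hb'
    · exact .inr ((singleton_sublist.mpr ha').cons_cons b)
    exact (ih ha' hb').imp (·.cons x) (·.cons x)

theorem Nodup.pair_sublist_trans (hl : l.Nodup) (hab : [a, b] <+ l) (hbc : [b, c] <+ l) :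
    [a, c] <+ l := by
  induction l with
  | nil => simp at hab
  | cons x l ih =>
    obtain ⟨hx, hl⟩ := nodup_cons.mp hl
    rcases sublist_cons_iff.mp hab with hab' | ⟨r, hr, hbl⟩
    · rcases sublist_cons_iff.mp hbc with hbc' | ⟨r', hr', -⟩
      · exact (ih hl hab' hbc').cons x
      · cases hr'
        exact absurd (hab'.subset (by simp)) hx
    · obtain ⟨rfl, rfl⟩ := cons_eq_cons.mp hr
      rcases sublist_cons_iff.mp hbc with hbc' | ⟨r', hr', -⟩
      · exact (singleton_sublist.mpr (hbc'.subset (by simp))).cons_cons a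
      · cases hr'
        exact absurd (singleton_sublist.mp hbl) hx

theorem range_prefix_range {m n : ℕ} (h : m ≤ n) : range m <+: range n := by
  simpa [take_range, min_eq_left h] using take_prefix m (range n)

end List

open List in
theorem isStrictTotalOrder_of_directed_sublist {ι α : Type*} [LE ι] [IsDirectedOrder ι]
    (f : ι → List α) (hmono : ∀ i j, i ≤ j → f i <+ f j) (hnodup : ∀ i, (f i).Nodup)
    (hcover : ∀ a, ∃ i, a ∈ f i) :
    IsStrictTotalOrder α (fun a b => ∃ i, [a, b] <+ f i) where
  irrefl a := fun ⟨i, h⟩ => nodup_iff_sublist.mp (hnodup i) a h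
  trichotomous a b hab hba := by
    by_contra hne
    obtain ⟨i, ha⟩ := hcover a
    obtain ⟨j, hb⟩ := hcover b
    obtain ⟨k, hik, hjk⟩ := exists_ge_ge i j
    rcases pair_sublist_or_pair_sublist ((hmono i k hik).subset ha)
      ((hmono j k hjk).subset hb) hne with h | h
    exacts [hab ⟨k, h⟩, hba ⟨k, h⟩]
  trans a b c := fun ⟨i, hab⟩ ⟨j, hbc⟩ => by
    obtain ⟨k, hik, hjk⟩ := exists_ge_ge i j
    exact ⟨k, (hnodup k).pair_sublist_trans (hab.trans (hmono i k hik))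
      (hbc.trans (hmono j k hjk))⟩

theorem streaming_induces_total_order_general {T : Type*} {n : ℕ}
    (σ : Fin n → ℕ → T)
    (A : (Fin n → List T) → List T)
    (hmono : ∀ g g' : Fin n → List T,
      (∀ i, (g i).IsPrefix (g' i)) → (A g).IsPrefix (A g'))
    (hnodup : ∀ g : Fin n → List T, (A g).Nodup)
    (hlive : ∀ τ : T, ∃ N : Fin n → ℕ,
      τ ∈ A (fun i => (List.range (N i)).map (σ i))) :
    IsStrictTotalOrder T (fun τ τ' : T =>
      ∃ (N : Fin n → ℕ) (l1 l2 l3 : List T),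
        A (fun i => (List.range (N i)).map (σ i)) = l1 ++ τ :: (l2 ++ τ' :: l3)) := by
  have hout_mono : ∀ N M : Fin n → ℕ, N ≤ M →
      (A fun i => (List.range (N i)).map (σ i)).Sublist
        (A fun i => (List.range (M i)).map (σ i)) := fun N M hNM =>
    (hmono _ _ fun i => (List.range_prefix_range (hNM i)).map (σ i)).sublist
  simpa only [List.pair_sublist_iff] using
    isStrictTotalOrder_of_directed_sublist _ hout_mono (fun _ => hnodup _) hlive

/-- A monotonic and asymptotically live streaming ranking algorithm induces a
well-defined strict total order on a countably infinite transaction set: with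
infinite ordering preferences `σ i : ℕ → T` (bijective enumerations of the
transactions), define `τ ≺ τ'` iff on some finite truncation of the inputs the
algorithm outputs `τ` before `τ'`. Then `≺` is a strict total order on `T`. -/
theorem streaming_induces_total_order {T : Type*} {n : ℕ} (hn : 0 < n)
    (σ : Fin n → ℕ → T) (hσ : ∀ i, Function.Bijective (σ i))
    (A : (Fin n → List T) → List T)
    (hmono : ∀ g g' : Fin n → List T,
      (∀ i, (g i).IsPrefix (g' i)) → (A g).IsPrefix (A g'))
    (hnodup : ∀ g : Fin n → List T, (A g).Nodup)
    (hlive : ∀ τ : T, ∃ N : Fin n → ℕ,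
      τ ∈ A (fun i => (List.range (N i)).map (σ i))) :
    IsStrictTotalOrder T (fun τ τ' : T =>
      ∃ (N : Fin n → ℕ) (l1 l2 l3 : List T),
        A (fun i => (List.range (N i)).map (σ i)) = l1 ++ τ :: (l2 ++ τ' :: l3)) :=
  streaming_induces_total_order_general σ A hmono hnodup hlive
end
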